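/- For self-adjoint operators A₁, A₂ on ℂ^d, k ∈ [d], and ℓ₁, ℓ₂ ∈ [d], the alignment term α^{(k)}_{(ℓ₁,ℓ₂)} := s_k(P_{↓ℓ₁}(A₁) + P_{↓ℓ₂}(A₂)) satisfies the lower bound α^{(k)}_{(ℓ₁,ℓ₂)} ≥ min(k, max(0, ℓ₁ + ℓ₂ − d)) + min(k, ℓ₁ + ℓ₂). In particular, if ℓ₁ + ℓ₂ ≤ k then α^{(k)}_{(ℓ₁,ℓ₂)} = ℓ₁ + ℓ₂. -/

import Mathlib

/-!
Let `P`, `Q` be the two projectors, with ranges `U`, `V`, and `M = P + Q`. The eigenvalues of `M`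
are nonnegative and sum to `tr M = ℓ₁ + ℓ₂`. Their multiplicities at `0` and `2` are read off from
`U` and `V`: `M = [P Q] [P Q]ᴴ` has rank `r = dim (U + V)`, and the eigenspace of `2` is `U ∩ V`,
of dimension `a`. Since `r + a = dim U + dim V = tr M`, the eigenvalues strictly between `0` and `2`
have average `1`, so the `a` eigenvalues equal to `2` followed by the largest intermediate ones give
`s_k(M) ≥ min(k, a) + min(k, r)`, which dominates the claimed bound because `a, r ≤ d`.
-/

open Matrix

/-- Sum of the `k` largest values of `f` (as the sup of sums over `k`-subsets). -/
noncomputable def sk {ι : Type*} [Fintype ι] (f : ι → ℝ) (k : ℕ) : ℝ :=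
  sSup {x | ∃ S : Finset ι, S.card = k ∧ x = ∑ i ∈ S, f i}

/-- Projector onto the span of the first `ℓ` of the vectors `v i`. -/
noncomputable def proj {d : ℕ} (v : Fin d → Fin d → ℂ) (ℓ : ℕ) : Matrix (Fin d) (Fin d) ℂ :=
  ∑ i ∈ Finset.univ.filter (fun i : Fin d => (i : ℕ) < ℓ),
    Matrix.vecMulVec (v i) (star (v i))

open Finset Module
open scoped ComplexOrder

namespace Matrix

section VecMulVec
variable {R n ι : Type*} [CommRing R] [StarRing R] [Fintype n] [DecidableEq ι] {v : ι → n → R}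

lemma isStarProjection_sum_vecMulVec (hv : ∀ i j, star (v i) ⬝ᵥ v j = if i = j then 1 else 0)
    (s : Finset ι) : IsStarProjection (∑ i ∈ s, vecMulVec (v i) (star (v i))) where
  isIdempotentElem := by
    rw [IsIdempotentElem, sum_mul_sum]
    refine sum_congr rfl fun i hi ↦ ?_
    simp [vecMulVec_mul_vecMulVec, hv, apply_ite (vecMulVec (v i)), hi]
  isSelfAdjoint := by
    simp [IsSelfAdjoint, star_sum, star_eq_conjTranspose, conjTranspose_vecMulVec]

lemma trace_sum_vecMulVec (hv : ∀ i j, star (v i) ⬝ᵥ v j = if i = j then 1 else 0)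
    (s : Finset ι) : (∑ i ∈ s, vecMulVec (v i) (star (v i))).trace = #s := by
  simp [trace_sum, trace_vecMulVec, dotProduct_comm (v _), hv]

end VecMulVec

lemma trace_eq_rank_of_isIdempotentElem {K n : Type*} [Field K] [Fintype n] [DecidableEq n]
    {P : Matrix n n K} (hP : IsIdempotentElem P) : P.trace = P.rank := by
  have hP' : IsIdempotentElem (toLin' P) := hP.map toLinAlgEquiv'
  rw [← trace_toLin'_eq, (LinearMap.IsIdempotentElem.isProj_range _ hP').trace]
  rfl

lemma rank_mul_conjTranspose_add_mul_conjTranspose {K m n p : Type*} [Field K] [PartialOrder K]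
    [StarRing K] [StarOrderedRing K] [Fintype m] [Fintype n] [Fintype p]
    (A : Matrix m n K) (B : Matrix m p K) :
    (A * Aᴴ + B * Bᴴ).rank =
      finrank K ↥(LinearMap.range A.mulVecLin ⊔ LinearMap.range B.mulVecLin) := by
  have hrange : LinearMap.range (fromCols A B).mulVecLin =
      LinearMap.range A.mulVecLin ⊔ LinearMap.range B.mulVecLin := by
    ext x
    simp only [LinearMap.mem_range, mulVecLin_apply, Submodule.mem_sup, fromCols_mulVec]
    constructor
    · rintro ⟨y, rfl⟩
      exact ⟨_, ⟨_, rfl⟩, _, ⟨_, rfl⟩, rfl⟩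
    · rintro ⟨_, ⟨y, rfl⟩, _, ⟨z, rfl⟩, rfl⟩
      exact ⟨Sum.elim y z, by simp⟩
  rw [← fromCols_mul_fromRows, ← conjTranspose_fromCols_eq_fromRows_conjTranspose,
    rank_self_mul_conjTranspose, rank, hrange]

section RCLike
variable {𝕜 n : Type*} [RCLike 𝕜] [Fintype n] {P Q : Matrix n n 𝕜}

lemma PosSemidef.add_mulVec_eq_zero_iff {A B : Matrix n n 𝕜} (hA : A.PosSemidef)
    (hB : B.PosSemidef) (x : n → 𝕜) : (A + B) *ᵥ x = 0 ↔ A *ᵥ x = 0 ∧ B *ᵥ x = 0 := by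
  refine ⟨fun h ↦ ?_, fun ⟨hAx, hBx⟩ ↦ by rw [add_mulVec, hAx, hBx, add_zero]⟩
  have hsum : star x ⬝ᵥ A *ᵥ x + star x ⬝ᵥ B *ᵥ x = 0 := by
    rw [← dotProduct_add, ← add_mulVec, h, dotProduct_zero]
  rw [add_eq_zero_iff_of_nonneg (hA.dotProduct_mulVec_nonneg x)
    (hB.dotProduct_mulVec_nonneg x)] at hsum
  exact ⟨(hA.dotProduct_mulVec_zero_iff x).mp hsum.1, (hB.dotProduct_mulVec_zero_iff x).mp hsum.2⟩

lemma IsStarProjection.posSemidef (hP : IsStarProjection P) : P.PosSemidef := by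
  have h : Pᴴ * P = P := by
    rw [← star_eq_conjTranspose, hP.isSelfAdjoint.star_eq, hP.isIdempotentElem.eq]
  simpa only [h] using posSemidef_conjTranspose_mul_self P

lemma mulVec_eq_self_iff_of_isIdempotentElem (hP : IsIdempotentElem P) (x : n → 𝕜) :
    P *ᵥ x = x ↔ x ∈ LinearMap.range P.mulVecLin :=
  ⟨fun h ↦ ⟨x, h⟩, fun ⟨y, hy⟩ ↦ by rw [← hy, mulVecLin_apply, mulVec_mulVec, hP.eq]⟩

variable [DecidableEq n]

lemma IsHermitian.rank_sub_smul_one {A : Matrix n n 𝕜} (hA : A.IsHermitian) (c : ℝ) :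
    (A - (c : 𝕜) • 1).rank = #{i | hA.eigenvalues i ≠ c} := by
  have h : A - (c : 𝕜) • 1 = Unitary.conjStarAlgAut 𝕜 _ hA.eigenvectorUnitary
      (diagonal (RCLike.ofReal ∘ (hA.eigenvalues - fun _ ↦ c))) := by
    conv_lhs => rw [hA.spectral_theorem]
    rw [← Algebra.algebraMap_eq_smul_one, ← AlgEquivClass.commutes
      (Unitary.conjStarAlgAut 𝕜 _ hA.eigenvectorUnitary) (c : 𝕜), ← map_sub]
    congr 1
    ext i j
    by_cases hij : i = j <;> simp [hij, algebraMap_eq_diagonal]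
  rw [h, Unitary.conjStarAlgAut_apply, ← Unitary.coe_star]
  simp [-isUnit_iff_ne_zero, -Unitary.coe_star, rank_diagonal, Fintype.card_subtype, sub_eq_zero]

lemma IsHermitian.card_eigenvalues_eq {A : Matrix n n 𝕜} (hA : A.IsHermitian) (c : ℝ) :
    #{i | hA.eigenvalues i = c} = finrank 𝕜 (LinearMap.ker (A - (c : 𝕜) • 1).mulVecLin) := by
  have hsplit := card_filter_add_card_filter_not (s := univ) (fun i ↦ hA.eigenvalues i = c)
  have hnullity := LinearMap.finrank_range_add_finrank_ker (A - (c : 𝕜) • 1).mulVecLin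
  rw [← rank, hA.rank_sub_smul_one, finrank_fintype_fun_eq_card] at hnullity
  rw [card_univ] at hsplit
  simp only [ne_eq] at hnullity
  omega

namespace IsStarProjection
variable (hP : IsStarProjection P) (hQ : IsStarProjection Q)
include hP hQ

lemma ker_add_sub_two_smul_one :
    LinearMap.ker (P + Q - (2 : 𝕜) • 1).mulVecLin =
      LinearMap.range P.mulVecLin ⊓ LinearMap.range Q.mulVecLin := by
  ext x
  have h : (P + Q - (2 : 𝕜) • 1) *ᵥ x = -(((1 - P) + (1 - Q)) *ᵥ x) := by
    simp only [add_mulVec, sub_mulVec, one_mulVec, two_smul]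
    abel
  simp only [LinearMap.mem_ker, mulVecLin_apply, h, neg_eq_zero,
    hP.one_sub.posSemidef.add_mulVec_eq_zero_iff hQ.one_sub.posSemidef, sub_mulVec, one_mulVec,
    sub_eq_zero, Submodule.mem_inf, ← mulVec_eq_self_iff_of_isIdempotentElem hP.isIdempotentElem,
    ← mulVec_eq_self_iff_of_isIdempotentElem hQ.isIdempotentElem, eq_comm (a := x)]

variable (hM : (P + Q).IsHermitian)

lemma sum_eigenvalues_add : ∑ i, hM.eigenvalues i = P.rank + Q.rank := by
  have h := hM.trace_eq_sum_eigenvalues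
  rw [trace_add, trace_eq_rank_of_isIdempotentElem hP.isIdempotentElem,
    trace_eq_rank_of_isIdempotentElem hQ.isIdempotentElem] at h
  exact_mod_cast h.symm

lemma card_eigenvalues_add_ne_zero :
    #{i | hM.eigenvalues i ≠ 0} =
      finrank 𝕜 ↥(LinearMap.range P.mulVecLin ⊔ LinearMap.range Q.mulVecLin) := by
  have h := rank_mul_conjTranspose_add_mul_conjTranspose P Q
  simp only [← star_eq_conjTranspose, hP.isSelfAdjoint.star_eq, hQ.isSelfAdjoint.star_eq,
    hP.isIdempotentElem.eq, hQ.isIdempotentElem.eq] at h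
  rw [← h, hM.rank_eq_card_non_zero_eigs, Fintype.card_subtype]

lemma card_eigenvalues_add_eq_two :
    #{i | hM.eigenvalues i = 2} =
      finrank 𝕜 ↥(LinearMap.range P.mulVecLin ⊓ LinearMap.range Q.mulVecLin) := by
  rw [hM.card_eigenvalues_eq 2, RCLike.ofReal_ofNat, hP.ker_add_sub_two_smul_one hQ]

lemma card_eigenvalues_add_ne_zero_add_card_eq_two :
    #{i | hM.eigenvalues i ≠ 0} + #{i | hM.eigenvalues i = 2} = P.rank + Q.rank := by
  rw [hP.card_eigenvalues_add_ne_zero hQ, hP.card_eigenvalues_add_eq_two hQ,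
    Submodule.finrank_sup_add_finrank_inf_eq]
  rfl

end IsStarProjection

end RCLike

end Matrix

section Proj
variable {d : ℕ} {v : Fin d → Fin d → ℂ} (hv : ∀ i j, star (v i) ⬝ᵥ v j = if i = j then 1 else 0)
include hv

lemma isStarProjection_proj (ℓ : ℕ) : IsStarProjection (proj v ℓ) :=
  isStarProjection_sum_vecMulVec hv _

lemma rank_proj {ℓ : ℕ} (hℓ : ℓ ≤ d) : (proj v ℓ).rank = ℓ := by
  have h := trace_eq_rank_of_isIdempotentElem (isStarProjection_proj hv ℓ).isIdempotentElem
  rw [proj, trace_sum_vecMulVec hv, Fin.card_filter_val_lt, min_eq_right hℓ] at h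
  exact_mod_cast h.symm

end Proj

section Averaging
variable {ι : Type*} [DecidableEq ι] (f : ι → ℝ)

lemma exists_subset_card_eq_mul_sum_le (s : Finset ι) {j : ℕ} (hj : j ≤ #s) :
    ∃ T ⊆ s, #T = j ∧ (j : ℝ) * ∑ i ∈ s, f i ≤ #s * ∑ i ∈ T, f i := by
  induction hj using Nat.decreasingInduction with
  | self => exact ⟨s, subset_rfl, rfl, le_rfl⟩
  | of_succ j hj ih =>
    obtain ⟨T, hTs, hTcard, hT⟩ := ih
    obtain ⟨m, hm, hmin⟩ := exists_min_image T f (card_pos.mp (by omega))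
    refine ⟨T.erase m, (erase_subset m T).trans hTs, by rw [card_erase_of_mem hm, hTcard]; rfl, ?_⟩
    -- dropping the smallest value keeps at least the fraction `j / (j + 1)` of the sum
    have hmavg : ((j + 1 : ℕ) : ℝ) * f m ≤ ∑ i ∈ T, f i := by
      simpa [hTcard] using card_nsmul_le_sum T f (f m) hmin
    have hsplit : ∑ i ∈ T.erase m, f i = ∑ i ∈ T, f i - f m := by
      rw [← sum_erase_add T f hm, add_sub_cancel_right]
    push_cast at hT hmavg
    have key : ((j : ℝ) + 1) * (j * ∑ i ∈ s, f i) ≤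
        ((j : ℝ) + 1) * (#s * ∑ i ∈ T.erase m, f i) := by
      rw [hsplit]
      nlinarith [mul_le_mul_of_nonneg_left hT (Nat.cast_nonneg j : (0 : ℝ) ≤ j),
        mul_le_mul_of_nonneg_left hmavg (Nat.cast_nonneg #s : (0 : ℝ) ≤ #s)]
    exact le_of_mul_le_mul_left key (by positivity)

lemma exists_subset_card_eq_le_sum {s : Finset ι} (hf : 0 ≤ f) (hs : ∑ i ∈ s, f i = #s)
    {j : ℕ} (hj : j ≤ #s) : ∃ T ⊆ s, #T = j ∧ (j : ℝ) ≤ ∑ i ∈ T, f i := by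
  obtain ⟨T, hTs, hTcard, hT⟩ := exists_subset_card_eq_mul_sum_le f s hj
  refine ⟨T, hTs, hTcard, ?_⟩
  rcases Nat.eq_zero_or_pos #s with hs0 | hs0
  · obtain rfl : j = 0 := by omega
    simpa using sum_nonneg fun i _ ↦ hf i
  · rw [hs, mul_comm] at hT
    exact le_of_mul_le_mul_left hT (by exact_mod_cast hs0)

end Averaging

section TopSum
variable {ι : Type*} [Fintype ι] (f : ι → ℝ)

lemma sum_le_sk {k : ℕ} {S : Finset ι} (hS : #S = k) : ∑ i ∈ S, f i ≤ sk f k := by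
  refine le_csSup (Set.Finite.bddAbove ?_) ⟨S, hS, rfl⟩
  refine (Set.finite_range fun S : Finset ι ↦ ∑ i ∈ S, f i).subset ?_
  rintro _ ⟨T, -, rfl⟩
  exact ⟨T, rfl⟩

lemma sum_le_sk_of_card_le {k : ℕ} {S : Finset ι} (hf : 0 ≤ f) (hS : #S ≤ k)
    (hk : k ≤ Fintype.card ι) : ∑ i ∈ S, f i ≤ sk f k := by
  obtain ⟨T, hST, -, hT⟩ := exists_subsuperset_card_eq (subset_univ S) hS (by simpa using hk)
  exact (sum_le_sum_of_subset_of_nonneg hST fun i _ _ ↦ hf i).trans (sum_le_sk f hT)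

lemma sk_le_sum {k : ℕ} (hf : 0 ≤ f) (hk : k ≤ Fintype.card ι) : sk f k ≤ ∑ i, f i := by
  obtain ⟨S, -, hS⟩ := exists_subset_card_eq (s := (univ : Finset ι)) (by simpa using hk)
  refine csSup_le ⟨_, S, hS, rfl⟩ ?_
  rintro _ ⟨T, -, rfl⟩
  exact sum_le_univ_sum_of_nonneg hf

lemma min_add_min_le_sk [DecidableEq ι] (hf : 0 ≤ f) {k : ℕ} (hk : k ≤ Fintype.card ι)
    (hsum : ∑ i, f i = #{i | f i ≠ 0} + #{i | f i = 2}) :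
    ((min k #{i | f i = 2} + min k #{i | f i ≠ 0} : ℕ) : ℝ) ≤ sk f k := by
  set A : Finset ι := {i | f i = 2}
  set R : Finset ι := {i | f i ≠ 0}
  have hAR : A ⊆ R := monotone_filter_right _ fun i _ (h : f i = 2) ↦ by simp [h]
  have hsumA : ∑ i ∈ A, f i = 2 * #A := by
    rw [sum_congr rfl fun i hi ↦ (mem_filter.mp hi).2, sum_const, nsmul_eq_mul, mul_comm]
  have hsumRA : ∑ i ∈ R \ A, f i = #(R \ A) := by
    rw [sum_sdiff_eq_sub hAR, sum_filter_ne_zero, hsumA, hsum, card_sdiff_of_subset hAR,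
      Nat.cast_sub (card_le_card hAR)]
    ring
  obtain ⟨A', hA'A, hA'⟩ := exists_subset_card_eq (min_le_right k #A)
  obtain ⟨S, hSRA, hS, hSsum⟩ := exists_subset_card_eq_le_sum f hf hsumRA
    (j := min k #R - min k #A) (by rw [card_sdiff_of_subset hAR]; omega)
  have hdisj : Disjoint A' S := disjoint_of_subset_left hA'A (subset_sdiff.mp hSRA).2.symm
  have hsumA' : ∑ i ∈ A', f i = 2 * #A' := by
    rw [sum_congr rfl fun i hi ↦ (mem_filter.mp (hA'A hi)).2, sum_const, nsmul_eq_mul, mul_comm]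
  have hcard : min k #A + min k #R = 2 * #A' + (min k #R - min k #A) := by
    have := card_le_card hAR
    omega
  calc ((min k #A + min k #R : ℕ) : ℝ) = 2 * #A' + ((min k #R - min k #A : ℕ) : ℝ) := by
        rw [hcard]; push_cast; ring
    _ ≤ ∑ i ∈ A' ∪ S, f i := by rw [sum_union hdisj, hsumA']; linarith
    _ ≤ sk f k := sum_le_sk_of_card_le f hf (by rw [card_union_of_disjoint hdisj]; omega) hk

end TopSum

lemma min_add_min_le_min_add_min {k d a r : ℝ} (hkd : k ≤ d) (had : a ≤ d) (hrd : r ≤ d) :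
    min k (a + r - d) + min k (a + r) ≤ min k a + min k r := by
  rcases le_total k a with hka | hka <;> rcases le_total k r with hkr | hkr <;>
    simp only [min_eq_left, min_eq_right, hka, hkr] <;>
    linarith [min_le_left k (a + r - d), min_le_right k (a + r - d),
      min_le_left k (a + r), min_le_right k (a + r)]

theorem stmt4_general {d : ℕ} (k ℓ₁ ℓ₂ : ℕ)
    (hkd : k ≤ d) (hℓ₁d : ℓ₁ ≤ d) (hℓ₂d : ℓ₂ ≤ d)
    (v w : Fin d → Fin d → ℂ)
    (hv : ∀ i j, star (v i) ⬝ᵥ v j = if i = j then 1 else 0)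
    (hw : ∀ i j, star (w i) ⬝ᵥ w j = if i = j then 1 else 0)
    (hS : (proj v ℓ₁ + proj w ℓ₂).IsHermitian) :
    (min k (ℓ₁ + ℓ₂ - d) : ℝ) + (min k (ℓ₁ + ℓ₂) : ℝ) ≤ sk hS.eigenvalues k
      ∧ (ℓ₁ + ℓ₂ ≤ k → sk hS.eigenvalues k = (ℓ₁ : ℝ) + ℓ₂) := by
  have hP := isStarProjection_proj hv ℓ₁
  have hQ := isStarProjection_proj hw ℓ₂
  have hf : 0 ≤ hS.eigenvalues := (hP.posSemidef.add hQ.posSemidef).eigenvalues_nonneg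
  have hcount := hP.card_eigenvalues_add_ne_zero_add_card_eq_two hQ hS
  have htrace := hP.sum_eigenvalues_add hQ hS
  rw [rank_proj hv hℓ₁d, rank_proj hw hℓ₂d] at hcount htrace
  have hk : k ≤ Fintype.card (Fin d) := by rwa [Fintype.card_fin]
  have hlow := min_add_min_le_sk hS.eigenvalues hf hk (by rw [htrace]; exact_mod_cast hcount.symm)
  set r := #{i | hS.eigenvalues i ≠ 0}
  set a := #{i | hS.eigenvalues i = 2}
  have had : a ≤ d := (card_le_univ _).trans_eq (Fintype.card_fin d)
  have hrd : r ≤ d := (card_le_univ _).trans_eq (Fintype.card_fin d)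
  constructor
  · have hcount' : (ℓ₁ : ℝ) + ℓ₂ = a + r := by rw [add_comm (a : ℝ)]; exact_mod_cast hcount.symm
    calc _ ≤ min (k : ℝ) a + min (k : ℝ) r := by
          rw [hcount']
          exact min_add_min_le_min_add_min (by exact_mod_cast hkd) (by exact_mod_cast had)
            (by exact_mod_cast hrd)
      _ ≤ sk hS.eigenvalues k := by exact_mod_cast hlow
  · intro ht
    refine le_antisymm ((sk_le_sum _ hf hk).trans_eq htrace) (le_trans ?_ hlow)
    have hmin : min k a + min k r = ℓ₁ + ℓ₂ := by omega
    exact_mod_cast hmin.ge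

/-- Lower bound on the alignment term (note ℕ-subtraction: `ℓ₁ + ℓ₂ - d = max 0 (ℓ₁+ℓ₂-d)`):
`α^{(k)}_{(ℓ₁,ℓ₂)} = s_k(P_{↓ℓ₁}(A₁) + P_{↓ℓ₂}(A₂)) ≥ min(k, max(0,ℓ₁+ℓ₂−d)) + min(k, ℓ₁+ℓ₂)`, with equality `= ℓ₁+ℓ₂` when `ℓ₁+ℓ₂ ≤ k`. -/
theorem stmt4 {d : ℕ} (k ℓ₁ ℓ₂ : ℕ)
    (hk1 : 1 ≤ k) (hkd : k ≤ d) (hℓ₁1 : 1 ≤ ℓ₁) (hℓ₁d : ℓ₁ ≤ d) (hℓ₂1 : 1 ≤ ℓ₂) (hℓ₂d : ℓ₂ ≤ d)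
    (A₁ A₂ : Matrix (Fin d) (Fin d) ℂ) (hA₁ : A₁.IsHermitian) (hA₂ : A₂.IsHermitian)
    (v w : Fin d → Fin d → ℂ)
    (hv : ∀ i j, star (v i) ⬝ᵥ v j = if i = j then 1 else 0)
    (hw : ∀ i j, star (w i) ⬝ᵥ w j = if i = j then 1 else 0)
    (μ ν : Fin d → ℝ) (hμ : Antitone μ) (hν : Antitone ν)
    (hveig : ∀ i, A₁ *ᵥ v i = (μ i : ℂ) • v i)
    (hweig : ∀ i, A₂ *ᵥ w i = (ν i : ℂ) • w i)
    (hS : (proj v ℓ₁ + proj w ℓ₂).IsHermitian) :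
    (min k (ℓ₁ + ℓ₂ - d) : ℝ) + (min k (ℓ₁ + ℓ₂) : ℝ) ≤ sk hS.eigenvalues k
      ∧ (ℓ₁ + ℓ₂ ≤ k → sk hS.eigenvalues k = (ℓ₁ : ℝ) + ℓ₂) :=
  stmt4_general k ℓ₁ ℓ₂ hkd hℓ₁d hℓ₂d v w hv hw hS
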